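/- arXiv:2408.04264 — 3 statements merged into one kernel-verified Lean document; each statement's English description precedes it below -/
import Mathlib

section
/- If G is a maximal outer k-planar graph with at least three vertices, then in every outer k-planar drawing of G, any two vertices that are consecutive in the cyclic order along the circle are adjacent in G; hence the outer face is bounded by a simple cycle through all vertices. -/
open Classical Real

/-- `x` lies strictly between `a` and `b` in the linear order on `ℝ`
(interpreted as positions along a cut-open circle). -/
def ArcBtw (x a b : ℝ) : Prop := min a b < x ∧ x < max a b

/-- The pairs `{a,b}` and `{c,d}` of positions on the circle are intertwined:
exactly one of `c`, `d` lies on the arc strictly between `a` and `b`. -/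
def Intertwined (a b c d : ℝ) : Prop := Xor' (ArcBtw c a b) (ArcBtw d a b)

/-- The vertex pairs `{a,b}` and `{c,d}` span four distinct vertices and are
intertwined in the cyclic order given by `pos`; equivalently, the corresponding
chords cross in the convex drawing. -/
def CrossPairs {V : Type*} (pos : V → ℝ) (a b c d : V) : Prop :=
  a ≠ c ∧ a ≠ d ∧ b ≠ c ∧ b ≠ d ∧ Intertwined (pos a) (pos b) (pos c) (pos d)

/-- The unordered pair `e` pierces (crosses) the chord `{a,b}`. -/
def Pierces {V : Type*} (pos : V → ℝ) (e : Sym2 V) (a b : V) : Prop :=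
  ∃ c d, e = s(c, d) ∧ CrossPairs pos a b c d

/-- Number of edges of `G` that cross the chord `{a,b}` in the convex drawing `pos`. -/
noncomputable def crossNum {V : Type*} (G : SimpleGraph V) (pos : V → ℝ) (a b : V) : ℕ :=
  {e ∈ G.edgeSet | Pierces pos e a b}.ncard

/-- `pos` is an outer `k`-planar drawing of `G`: a convex drawing (injective
placement on the circle) where every edge is crossed by at most `k` other edges. -/
def IsOuterkPlanarDrawing {V : Type*} (G : SimpleGraph V) (k : ℕ) (pos : V → ℝ) : Prop :=
  Function.Injective pos ∧ ∀ a b, G.Adj a b → crossNum G pos a b ≤ k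

/-- `G` is outer `k`-planar. -/
def IsOuterkPlanar {V : Type*} (G : SimpleGraph V) (k : ℕ) : Prop :=
  ∃ pos : V → ℝ, IsOuterkPlanarDrawing G k pos

/-- `a` and `b` are consecutive in the cyclic order given by `pos`:
one of the two open arcs between them contains no vertex. -/
def ConsecutiveAt {V : Type*} (pos : V → ℝ) (a b : V) : Prop :=
  a ≠ b ∧ ((∀ x, x ≠ a → x ≠ b → ArcBtw (pos x) (pos a) (pos b)) ∨
           (∀ x, x ≠ a → x ≠ b → ¬ ArcBtw (pos x) (pos a) (pos b)))

/-- The unordered pairs `e` and `f` cross in the convex drawing `pos`. -/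
def SymCross {V : Type*} (pos : V → ℝ) (e f : Sym2 V) : Prop :=
  ∃ a b c d, e = s(a, b) ∧ f = s(c, d) ∧ CrossPairs pos a b c d

/-- A triangulation of the convex polygon whose vertices are placed by `pos`:
a maximal set of pairwise non-crossing inner diagonals. Together with the
polygon sides (pairs of consecutive vertices) these are the links of the
triangulation. -/
structure PolyTriangulation {V : Type*} (pos : V → ℝ) where
  diags : Set (Sym2 V)
  diag_proper : ∀ e ∈ diags, ∀ a b : V, e = s(a, b) → a ≠ b ∧ ¬ ConsecutiveAt pos a b
  noncross : ∀ e ∈ diags, ∀ f ∈ diags, ¬ SymCross pos e f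
  maximal : ∀ a b : V, a ≠ b → ¬ ConsecutiveAt pos a b → s(a, b) ∉ diags →
      ∃ e ∈ diags, SymCross pos e s(a, b)

/-- `{a,b}` is a link of the triangulation `T`: a polygon side or a diagonal. -/
def PolyTriangulation.IsLink {V : Type*} {pos : V → ℝ} (T : PolyTriangulation pos)
    (a b : V) : Prop :=
  ConsecutiveAt pos a b ∨ s(a, b) ∈ T.diags

/-- `u`, `v`, `w` form a triangle (face) of the triangulation `T`. -/
def PolyTriangulation.IsTriangle {V : Type*} {pos : V → ℝ} (T : PolyTriangulation pos)
    (u v w : V) : Prop :=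
  u ≠ v ∧ v ≠ w ∧ u ≠ w ∧ T.IsLink u v ∧ T.IsLink v w ∧ T.IsLink u w

/-- `G` is a maximal outer `k`-planar graph: it is outer `k`-planar and adding
any non-edge destroys outer `k`-planarity. -/
def IsMaximalOuterkPlanar {V : Type*} (G : SimpleGraph V) (k : ℕ) : Prop :=
  IsOuterkPlanar G k ∧
    ∀ a b : V, a ≠ b → ¬ G.Adj a b →
      ¬ IsOuterkPlanar (G ⊔ SimpleGraph.fromEdgeSet {s(a, b)}) k

/-! A side of the polygon, i.e. a pair of consecutive vertices, crosses no chord at all: one of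
its two arcs is empty, so no chord can have exactly one endpoint there. Adding such a side to `G`
therefore changes no crossing number and creates an edge that is crossed by nothing, so the
drawing stays outer `k`-planar; maximality then forces the side to be an edge already. -/

theorem intertwined_iff {a b c d : ℝ} :
    Intertwined a b c d ↔ (ArcBtw c a b ∧ ¬ ArcBtw d a b) ∨ (ArcBtw d a b ∧ ¬ ArcBtw c a b) :=
  Iff.rfl

theorem Intertwined.symm {a b c d : ℝ} (h : Intertwined a b c d)
    (hac : a ≠ c) (had : a ≠ d) (hbc : b ≠ c) (hbd : b ≠ d) : Intertwined c d a b := by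
  simp only [intertwined_iff, ArcBtw] at *
  grind

theorem Intertwined.swap {a b c d : ℝ} (h : Intertwined a b c d) : Intertwined a b d c :=
  Or.symm h

theorem arcBtw_comm {x a b : ℝ} : ArcBtw x a b ↔ ArcBtw x b a := by
  rw [ArcBtw, ArcBtw, min_comm, max_comm]

section

variable {V : Type*} {pos : V → ℝ} {a b c d : V}

theorem CrossPairs.swap (h : CrossPairs pos a b c d) : CrossPairs pos a b d c :=
  ⟨h.2.1, h.1, h.2.2.2.1, h.2.2.1, h.2.2.2.2.swap⟩

theorem CrossPairs.symm (hinj : pos.Injective) (h : CrossPairs pos a b c d) :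
    CrossPairs pos c d a b :=
  ⟨h.1.symm, h.2.2.1.symm, h.2.1.symm, h.2.2.2.1.symm,
    h.2.2.2.2.symm (hinj.ne h.1) (hinj.ne h.2.1) (hinj.ne h.2.2.1) (hinj.ne h.2.2.2.1)⟩

theorem Pierces.symm (hinj : pos.Injective) (h : Pierces pos s(a, b) c d) :
    Pierces pos s(c, d) a b := by
  obtain ⟨a', b', he, hcross⟩ := h
  refine ⟨c, d, rfl, ?_⟩
  rcases Sym2.eq_iff.1 he with ⟨rfl, rfl⟩ | ⟨rfl, rfl⟩
  · exact hcross.symm hinj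
  · exact hcross.swap.symm hinj

theorem ConsecutiveAt.symm (h : ConsecutiveAt pos a b) : ConsecutiveAt pos b a := by
  refine ⟨h.1.symm, ?_⟩
  simp only [arcBtw_comm (a := pos b)]
  exact h.2.imp (fun hall x hxb hxa => hall x hxa hxb) (fun hnone x hxb hxa => hnone x hxa hxb)

theorem ConsecutiveAt.not_pierces (h : ConsecutiveAt pos a b) (e : Sym2 V) :
    ¬ Pierces pos e a b := by
  rintro ⟨c, d, -, hac, had, hbc, hbd, hcross⟩
  rcases h.2 with hall | hnone
  · rcases hcross with ⟨-, hd⟩ | ⟨-, hc⟩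
    · exact hd (hall d had.symm hbd.symm)
    · exact hc (hall c hac.symm hbc.symm)
  · rcases hcross with ⟨hc, -⟩ | ⟨hd, -⟩
    · exact hnone c hac.symm hbc.symm hc
    · exact hnone d had.symm hbd.symm hd

theorem crossNum_eq_zero_of_consecutiveAt (G : SimpleGraph V) (h : ConsecutiveAt pos a b) :
    crossNum G pos a b = 0 := by
  simp [crossNum, h.not_pierces]

theorem crossNum_sup_edge_of_consecutiveAt (G : SimpleGraph V) (hinj : pos.Injective)
    (h : ConsecutiveAt pos a b) (c d : V) :
    crossNum (G ⊔ SimpleGraph.fromEdgeSet {s(a, b)}) pos c d = crossNum G pos c d := by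
  unfold crossNum
  congr 1
  ext e
  simp only [SimpleGraph.edgeSet_sup, SimpleGraph.edgeSet_fromEdgeSet, Set.mem_ofPred_eq,
    Set.mem_union, Set.mem_sdiff, Set.mem_singleton_iff]
  refine ⟨?_, fun ⟨he, hp⟩ => ⟨Or.inl he, hp⟩⟩
  rintro ⟨he | ⟨rfl, -⟩, hp⟩
  · exact ⟨he, hp⟩
  · exact absurd (hp.symm hinj) (h.not_pierces _)

theorem IsOuterkPlanarDrawing.sup_edge_of_consecutiveAt {G : SimpleGraph V} {k : ℕ}
    (hdraw : IsOuterkPlanarDrawing G k pos) (h : ConsecutiveAt pos a b) :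
    IsOuterkPlanarDrawing (G ⊔ SimpleGraph.fromEdgeSet {s(a, b)}) k pos := by
  refine ⟨hdraw.1, fun c d hadj => ?_⟩
  rw [crossNum_sup_edge_of_consecutiveAt G hdraw.1 h]
  rcases hadj with hG | ⟨he, -⟩
  · exact hdraw.2 c d hG
  · have hcd : ConsecutiveAt pos c d := by
      rcases Sym2.eq_iff.1 (Set.mem_singleton_iff.1 he) with ⟨rfl, rfl⟩ | ⟨rfl, rfl⟩
      exacts [h, h.symm]
    exact (crossNum_eq_zero_of_consecutiveAt G hcd).trans_le k.zero_le

end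

theorem maximal_outerkPlanar_consecutive_adjacent_general {V : Type*}
    (G : SimpleGraph V) (k : ℕ)
    (hmax : IsMaximalOuterkPlanar G k)
    (pos : V → ℝ) (hdraw : IsOuterkPlanarDrawing G k pos) :
    ∀ a b : V, ConsecutiveAt pos a b → G.Adj a b := by
  intro a b hcons
  by_contra hadj
  exact hmax.2 a b hcons.1 hadj ⟨pos, hdraw.sup_edge_of_consecutiveAt hcons⟩

/-- If `G` is a maximal outer `k`-planar graph with at least three vertices,
then in every outer `k`-planar drawing of `G`, any two vertices that are
consecutive in the cyclic order are adjacent in `G`; hence the outer face is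
bounded by a simple cycle through all vertices. -/
theorem maximal_outerkPlanar_consecutive_adjacent {V : Type*} [Fintype V]
    (G : SimpleGraph V) (k : ℕ) (hV : 3 ≤ Fintype.card V)
    (hmax : IsMaximalOuterkPlanar G k)
    (pos : V → ℝ) (hdraw : IsOuterkPlanarDrawing G k pos) :
    ∀ a b : V, ConsecutiveAt pos a b → G.Adj a b :=
  maximal_outerkPlanar_consecutive_adjacent_general G k hmax pos hdraw
end

section
/- For every even n ≥ 1 (number of columns n) and even m, the m × n stacked prism Y_{m,n} admits a convex drawing (vertices on a circle) in which every edge crosses at most 2n − 2 other edges; that is, the convex local crossing number of Y_{m,n} is at most 2n − 2. -/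
open Classical Real

/-- The `m × n` stacked prism `Y_{m,n}`: the `m × n` grid graph (row edges
between horizontally adjacent vertices, column edges between vertically
adjacent vertices) with additional edges joining, in each column `j`, the top
vertex `(0, j)` to the bottom vertex `(m−1, j)`. -/
def stackedPrism (m n : ℕ) : SimpleGraph (Fin m × Fin n) :=
  SimpleGraph.fromRel (fun p q =>
    (p.1 = q.1 ∧ (q.2 : ℕ) = (p.2 : ℕ) + 1) ∨
    (p.2 = q.2 ∧ ((q.1 : ℕ) = (p.1 : ℕ) + 1 ∨ ((p.1 : ℕ) = 0 ∧ (q.1 : ℕ) = m - 1))))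

---------------------------------------------------------------------------
-- auxiliary material
---------------------------------------------------------------------------

private def nxt {m : ℕ} (r : Fin m) : Fin m := ⟨(r.1 + 1) % m, Nat.mod_lt _ r.pos⟩
private def prv {m : ℕ} (r : Fin m) : Fin m := ⟨(r.1 + (m - 1)) % m, Nat.mod_lt _ r.pos⟩

private def iotaf {m n : ℕ} (p : Fin m × Fin n) : ℕ := p.1.1 * n + p.2.1

private lemma lexlt {n a b c d : ℕ} (hb : b < n) (hd : d < n) :
    a * n + b < c * n + d ↔ a < c ∨ (a = c ∧ b < d) := by
  constructor
  · intro h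
    rcases lt_trichotomy a c with h1 | h1 | h1
    · exact Or.inl h1
    · exact Or.inr ⟨h1, by subst h1; omega⟩
    · exfalso
      have h2 : (c + 1) * n ≤ a * n := Nat.mul_le_mul_right n h1
      have h3 : (c + 1) * n = c * n + n := by ring
      omega
  · rintro (h1 | ⟨rfl, h1⟩)
    · have h2 : (a + 1) * n ≤ c * n := Nat.mul_le_mul_right n h1
      have h3 : (a + 1) * n = a * n + n := by ring
      omega
    · omega

private lemma iota_inj {m n : ℕ} : Function.Injective (iotaf (m := m) (n := n)) := by
  intro p q h
  have A : ¬(p.1.1 < q.1.1 ∨ (p.1.1 = q.1.1 ∧ p.2.1 < q.2.1)) := fun hx => by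
    have := (lexlt p.2.isLt q.2.isLt).mpr hx
    unfold iotaf at h; omega
  have B : ¬(q.1.1 < p.1.1 ∨ (q.1.1 = p.1.1 ∧ q.2.1 < p.2.1)) := fun hx => by
    have := (lexlt q.2.isLt p.2.isLt).mpr hx
    unfold iotaf at h; omega
  push_neg at A B
  exact Prod.ext (Fin.ext (by omega)) (Fin.ext (by omega))

private lemma arc_iff (x y z : ℕ) :
    ArcBtw (x : ℝ) (y : ℝ) (z : ℝ) ↔ (min y z < x ∧ x < max y z) := by
  unfold ArcBtw
  rw [← Nat.cast_min y z, ← Nat.cast_max y z, Nat.cast_lt, Nat.cast_lt]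

private lemma intertwined_comm {a b c d : ℝ} :
    Intertwined a b c d ↔ Intertwined b a c d := by
  unfold Intertwined ArcBtw
  rw [min_comm b a, max_comm b a]

private lemma crossNum_comm {V : Type*} (G : SimpleGraph V) (pos : V → ℝ) (a b : V) :
    crossNum G pos a b = crossNum G pos b a := by
  unfold crossNum
  congr 1
  ext e
  simp only [Set.mem_setOf_eq, Pierces, CrossPairs]
  constructor
  · rintro ⟨he, c, d, h1, h2, h3, h4, h5, h6⟩
    exact ⟨he, c, d, h1, h4, h5, h2, h3, intertwined_comm.mp h6⟩
  · rintro ⟨he, c, d, h1, h2, h3, h4, h5, h6⟩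
    exact ⟨he, c, d, h1, h4, h5, h2, h3, intertwined_comm.mpr h6⟩

private lemma adj_cases {m n : ℕ} {c d : Fin m × Fin n}
    (h : (stackedPrism m n).Adj c d) :
    (c.1 = d.1 ∧ ((d.2 : ℕ) = (c.2 : ℕ) + 1 ∨ (c.2 : ℕ) = (d.2 : ℕ) + 1)) ∨ c.2 = d.2 := by
  rw [stackedPrism, SimpleGraph.fromRel_adj] at h
  rcases h.2 with (⟨h1, h2⟩ | ⟨h1, _⟩) | (⟨h1, h2⟩ | ⟨h1, _⟩)
  · exact Or.inl ⟨h1, Or.inl h2⟩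
  · exact Or.inr h1
  · exact Or.inl ⟨h1.symm, Or.inr h2⟩
  · exact Or.inr h1.symm

private lemma col_adj {m n : ℕ} {c d : Fin m × Fin n}
    (h : (stackedPrism m n).Adj c d) (hc : c.2 = d.2) :
    d.1 = nxt c.1 ∨ d.1 = prv c.1 := by
  rw [stackedPrism, SimpleGraph.fromRel_adj] at h
  have hm : 0 < m := c.1.pos
  have hc2 : (c.2 : ℕ) = (d.2 : ℕ) := congrArg Fin.val hc
  have hd1 := d.1.isLt
  have hc1 := c.1.isLt
  rcases h.2 with (⟨_, h2⟩ | ⟨_, h2 | ⟨h2, h3⟩⟩) | (⟨_, h2⟩ | ⟨_, h2 | ⟨h2, h3⟩⟩)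
  · omega
  · left; apply Fin.ext
    show (d.1 : ℕ) = (c.1.1 + 1) % m
    rw [Nat.mod_eq_of_lt (by omega : c.1.1 + 1 < m)]; omega
  · right; apply Fin.ext
    show (d.1 : ℕ) = (c.1.1 + (m - 1)) % m
    rw [h2, Nat.zero_add, Nat.mod_eq_of_lt (by omega : m - 1 < m)]; omega
  · omega
  · right; apply Fin.ext
    show (d.1 : ℕ) = (c.1.1 + (m - 1)) % m
    have e1 : c.1.1 + (m - 1) = d.1.1 + m := by omega
    rw [e1, Nat.add_mod_right, Nat.mod_eq_of_lt d.1.isLt]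
  · left; apply Fin.ext
    show (d.1 : ℕ) = (c.1.1 + 1) % m
    have e1 : c.1.1 + 1 = m := by omega
    rw [e1, Nat.mod_self]; omega
private def basev {m n : ℕ} (a : Fin m × Fin n) (r₁ r₂ : Fin m) (c : Fin n) : Fin m :=
  if (a.2 : ℕ) < (c : ℕ) then r₁ else r₂

private def gmap {m n : ℕ} (a : Fin m × Fin n) (r₁ r₂ : Fin m) (x : Fin n × Bool) :
    Sym2 (Fin m × Fin n) :=
  s((basev a r₁ r₂ x.1, x.1),
    (cond x.2 (nxt (basev a r₁ r₂ x.1)) (prv (basev a r₁ r₂ x.1)), x.1))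

private def Fset {m n : ℕ} (a : Fin m × Fin n) (r₁ r₂ : Fin m) :
    Finset (Sym2 (Fin m × Fin n)) :=
  ((Finset.univ.erase a.2) ×ˢ (Finset.univ : Finset Bool)).image (gmap a r₁ r₂)

private lemma Fset_card {m n : ℕ} (a : Fin m × Fin n) (r₁ r₂ : Fin m) :
    (Fset a r₁ r₂).card ≤ 2 * n - 2 := by
  have hn : 0 < n := a.2.pos
  have h1 := Finset.card_image_le (f := gmap a r₁ r₂)
      (s := (Finset.univ.erase a.2) ×ˢ (Finset.univ : Finset Bool))
  have h2 : ((Finset.univ.erase a.2) ×ˢ (Finset.univ : Finset Bool)).card = (n - 1) * 2 := by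
    rw [Finset.card_product, Finset.card_erase_of_mem (Finset.mem_univ _)]
    simp
  rw [Fset]
  omega

private lemma pierce_memB {m n : ℕ} {a b : Fin m × Fin n} (hcol : a.2 = b.2)
    (hstep : (b.1 : ℕ) = (a.1 : ℕ) + 1) {e : Sym2 (Fin m × Fin n)}
    (he : e ∈ (stackedPrism m n).edgeSet)
    (hp : Pierces (fun p => ((iotaf p : ℕ) : ℝ)) e a b) :
    e ∈ Fset a a.1 b.1 := by
  have hn : 0 < n := a.2.pos
  have hb2 : (b.2 : ℕ) = (a.2 : ℕ) := (congrArg Fin.val hcol).symm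
  have hia : iotaf a = a.1.1 * n + a.2.1 := rfl
  have hsm : (a.1.1 + 1) * n = a.1.1 * n + n := by ring
  have hib : iotaf b = a.1.1 * n + n + a.2.1 := by
    show b.1.1 * n + b.2.1 = _
    rw [hstep, hsm]; omega
  have hab : iotaf a < iotaf b := by omega
  suffices key : ∀ c d : Fin m × Fin n, (stackedPrism m n).Adj c d →
      c ≠ a → c ≠ b → d ≠ a → d ≠ b →
      (iotaf a < iotaf c ∧ iotaf c < iotaf b) →
      (iotaf d < iotaf a ∨ iotaf b < iotaf d) →
      s(c, d) ∈ Fset a a.1 b.1 by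
    obtain ⟨c, d, rfl, hac, had, hbc, hbd, hx⟩ := hp
    have hadj : (stackedPrism m n).Adj c d := (SimpleGraph.mem_edgeSet _).mp he
    have hmin : min (iotaf a) (iotaf b) = iotaf a := min_eq_left hab.le
    have hmax : max (iotaf a) (iotaf b) = iotaf b := max_eq_right hab.le
    rcases hx with ⟨h1, h2⟩ | ⟨h1, h2⟩
    · have h1' := (arc_iff (iotaf c) (iotaf a) (iotaf b)).mp h1
      have h2' : ¬ (min (iotaf a) (iotaf b) < iotaf d ∧ iotaf d < max (iotaf a) (iotaf b)) :=
        fun hh => h2 ((arc_iff (iotaf d) (iotaf a) (iotaf b)).mpr hh)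
      rw [hmin, hmax] at h1' h2'
      have hd1 : iotaf d ≠ iotaf a := fun hh => had (iota_inj hh).symm
      have hd2 : iotaf d ≠ iotaf b := fun hh => hbd (iota_inj hh).symm
      exact key c d hadj hac.symm hbc.symm had.symm hbd.symm h1' (by omega)
    · have h1' := (arc_iff (iotaf d) (iotaf a) (iotaf b)).mp h1
      have h2' : ¬ (min (iotaf a) (iotaf b) < iotaf c ∧ iotaf c < max (iotaf a) (iotaf b)) :=
        fun hh => h2 ((arc_iff (iotaf c) (iotaf a) (iotaf b)).mpr hh)
      rw [hmin, hmax] at h1' h2'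
      have hd1 : iotaf c ≠ iotaf a := fun hh => hac (iota_inj hh).symm
      have hd2 : iotaf c ≠ iotaf b := fun hh => hbc (iota_inj hh).symm
      rw [Sym2.eq_swap]
      exact key d c hadj.symm had.symm hbd.symm hac.symm hbc.symm h1' (by omega)
  intro c d hadj hca hcb hda hdb hcin hdout
  have hic : iotaf c = c.1.1 * n + c.2.1 := rfl
  have hid : iotaf d = d.1.1 * n + d.2.1 := rfl
  have hcl1 : a.1.1 < c.1.1 ∨ (a.1.1 = c.1.1 ∧ a.2.1 < c.2.1) :=
    (lexlt a.2.isLt c.2.isLt).mp (by rw [← hia, ← hic]; exact hcin.1)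
  have hcl2 : c.1.1 < a.1.1 + 1 ∨ (c.1.1 = a.1.1 + 1 ∧ c.2.1 < a.2.1) := by
    refine (lexlt c.2.isLt a.2.isLt).mp ?_
    rw [← hic, hsm]
    omega
  have hcc : (c.1.1 = a.1.1 ∧ a.2.1 < c.2.1) ∨ (c.1.1 = a.1.1 + 1 ∧ c.2.1 < a.2.1) := by
    omega
  rcases adj_cases hadj with ⟨hrow, hpm⟩ | hcd2
  · exfalso
    have hrv : d.1.1 = c.1.1 := (congrArg Fin.val hrow).symm
    have hdd : iotaf d = c.1.1 * n + d.2.1 := by rw [hid, hrv]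
    have hcn : c.1.1 * n = a.1.1 * n ∨ c.1.1 * n = a.1.1 * n + n := by
      rcases hcc with ⟨h3, _⟩ | ⟨h3, _⟩
      · exact Or.inl (by rw [h3])
      · exact Or.inr (by rw [h3, hsm])
    have hd2 := d.2.isLt
    have ha2 := a.2.isLt
    have hc2 := c.2.isLt
    rcases hcn with hcn | hcn <;> omega
  · rcases col_adj hadj hcd2 with hnd | hnd
    · refine Finset.mem_image.mpr ⟨(c.2, true), Finset.mem_product.mpr
        ⟨Finset.mem_erase.mpr ⟨?_, Finset.mem_univ _⟩, Finset.mem_univ _⟩, ?_⟩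
      · show c.2 ≠ a.2
        intro hh
        have h9 : (c.2 : ℕ) = (a.2 : ℕ) := congrArg Fin.val hh
        omega
      · have hv : basev a a.1 b.1 c.2 = c.1 := by
          unfold basev
          rcases hcc with ⟨h3, h4⟩ | ⟨h3, h4⟩
          · rw [if_pos h4]; exact Fin.ext h3.symm
          · rw [if_neg (by omega)]; exact Fin.ext (by omega)
        show s((basev a a.1 b.1 c.2, c.2), (nxt (basev a a.1 b.1 c.2), c.2)) = s(c, d)
        rw [hv]
        have h1 : (c.1, c.2) = c := rfl
        have h2 : (nxt c.1, c.2) = d := Prod.ext hnd.symm hcd2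
        rw [h1, h2]
    · refine Finset.mem_image.mpr ⟨(c.2, false), Finset.mem_product.mpr
        ⟨Finset.mem_erase.mpr ⟨?_, Finset.mem_univ _⟩, Finset.mem_univ _⟩, ?_⟩
      · show c.2 ≠ a.2
        intro hh
        have h9 : (c.2 : ℕ) = (a.2 : ℕ) := congrArg Fin.val hh
        omega
      · have hv : basev a a.1 b.1 c.2 = c.1 := by
          unfold basev
          rcases hcc with ⟨h3, h4⟩ | ⟨h3, h4⟩
          · rw [if_pos h4]; exact Fin.ext h3.symm
          · rw [if_neg (by omega)]; exact Fin.ext (by omega)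
        show s((basev a a.1 b.1 c.2, c.2), (prv (basev a a.1 b.1 c.2), c.2)) = s(c, d)
        rw [hv]
        have h1 : (c.1, c.2) = c := rfl
        have h2 : (prv c.1, c.2) = d := Prod.ext hnd.symm hcd2
        rw [h1, h2]
private lemma pierce_memC {m n : ℕ} {a b : Fin m × Fin n} (hcol : a.2 = b.2)
    (h0 : (a.1 : ℕ) = 0) (h1 : (b.1 : ℕ) = m - 1) (hne : a ≠ b)
    {e : Sym2 (Fin m × Fin n)}
    (he : e ∈ (stackedPrism m n).edgeSet)
    (hp : Pierces (fun p => ((iotaf p : ℕ) : ℝ)) e a b) :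
    e ∈ Fset a b.1 a.1 := by
  have hn : 0 < n := a.2.pos
  have hm : 0 < m := a.1.pos
  have hb2 : (b.2 : ℕ) = (a.2 : ℕ) := (congrArg Fin.val hcol).symm
  have hm2 : 2 ≤ m := by
    by_contra hh
    have hm1 : m = 1 := by omega
    exact hne (Prod.ext (Fin.ext (by omega)) hcol)
  have hia : iotaf a = a.2.1 := by
    show a.1.1 * n + a.2.1 = _
    rw [h0]; ring
  have hib : iotaf b = (m - 1) * n + a.2.1 := by
    show b.1.1 * n + b.2.1 = _
    rw [h1]; omega
  have hmn : 1 * n ≤ (m - 1) * n := Nat.mul_le_mul_right n (by omega)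
  have hab : iotaf a < iotaf b := by
    rw [hia, hib]; omega
  suffices key : ∀ c d : Fin m × Fin n, (stackedPrism m n).Adj c d →
      c ≠ a → c ≠ b → d ≠ a → d ≠ b →
      (iotaf a < iotaf c ∧ iotaf c < iotaf b) →
      (iotaf d < iotaf a ∨ iotaf b < iotaf d) →
      s(c, d) ∈ Fset a b.1 a.1 by
    obtain ⟨c, d, rfl, hac, had, hbc, hbd, hx⟩ := hp
    have hadj : (stackedPrism m n).Adj c d := (SimpleGraph.mem_edgeSet _).mp he
    have hmin : min (iotaf a) (iotaf b) = iotaf a := min_eq_left hab.le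
    have hmax : max (iotaf a) (iotaf b) = iotaf b := max_eq_right hab.le
    rcases hx with ⟨hx1, hx2⟩ | ⟨hx1, hx2⟩
    · have h1' := (arc_iff (iotaf c) (iotaf a) (iotaf b)).mp hx1
      have h2' : ¬ (min (iotaf a) (iotaf b) < iotaf d ∧ iotaf d < max (iotaf a) (iotaf b)) :=
        fun hh => hx2 ((arc_iff (iotaf d) (iotaf a) (iotaf b)).mpr hh)
      rw [hmin, hmax] at h1' h2'
      have hd1 : iotaf d ≠ iotaf a := fun hh => had (iota_inj hh).symm
      have hd2 : iotaf d ≠ iotaf b := fun hh => hbd (iota_inj hh).symm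
      exact key c d hadj hac.symm hbc.symm had.symm hbd.symm h1' (by omega)
    · have h1' := (arc_iff (iotaf d) (iotaf a) (iotaf b)).mp hx1
      have h2' : ¬ (min (iotaf a) (iotaf b) < iotaf c ∧ iotaf c < max (iotaf a) (iotaf b)) :=
        fun hh => hx2 ((arc_iff (iotaf c) (iotaf a) (iotaf b)).mpr hh)
      rw [hmin, hmax] at h1' h2'
      have hd1 : iotaf c ≠ iotaf a := fun hh => hac (iota_inj hh).symm
      have hd2 : iotaf c ≠ iotaf b := fun hh => hbc (iota_inj hh).symm
      rw [Sym2.eq_swap]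
      exact key d c hadj.symm had.symm hbd.symm hac.symm hbc.symm h1' (by omega)
  intro c d hadj hca hcb hda hdb hcin hdout
  have hic : iotaf c = c.1.1 * n + c.2.1 := rfl
  have hid : iotaf d = d.1.1 * n + d.2.1 := rfl
  have hd1lt := d.1.isLt
  -- characterize d
  have hdd : (d.1.1 = 0 ∧ d.2.1 < a.2.1) ∨ (d.1.1 = m - 1 ∧ a.2.1 < d.2.1) := by
    rcases hdout with hdo | hdo
    · left
      have : d.1.1 * n + d.2.1 < 0 * n + a.2.1 := by
        rw [← hid]; omega
      have := (lexlt d.2.isLt a.2.isLt).mp this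
      omega
    · right
      have : (m - 1) * n + a.2.1 < d.1.1 * n + d.2.1 := by
        rw [← hid, ← hib]; exact hdo
      have := (lexlt a.2.isLt d.2.isLt).mp this
      omega
  rcases adj_cases hadj with ⟨hrow, hpm⟩ | hcd2
  · exfalso
    have hrv : c.1.1 = d.1.1 := congrArg Fin.val hrow
    have hdd4 : iotaf c = d.1.1 * n + c.2.1 := by rw [hic, hrv]
    have ha2 := a.2.isLt
    have hc2 := c.2.isLt
    have hd2 := d.2.isLt
    rcases hdd with ⟨h3, h4⟩ | ⟨h3, h4⟩
    · have hz : d.1.1 * n = 0 := by rw [h3]; ring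
      omega
    · have hz : d.1.1 * n = (m - 1) * n := by rw [h3]
      omega
  · -- column-type crossing edge
    have hdc2 : d.2 = c.2 := hcd2.symm
    have hc2v : (c.2 : ℕ) = (d.2 : ℕ) := congrArg Fin.val hcd2
    rcases col_adj hadj.symm hdc2 with hnc | hnc
    · -- c.1 = nxt d.1
      refine Finset.mem_image.mpr ⟨(c.2, true), Finset.mem_product.mpr
        ⟨Finset.mem_erase.mpr ⟨?_, Finset.mem_univ _⟩, Finset.mem_univ _⟩, ?_⟩
      · show c.2 ≠ a.2
        intro hh
        have h9 : (c.2 : ℕ) = (a.2 : ℕ) := congrArg Fin.val hh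
        rcases hdd with ⟨_, h4⟩ | ⟨_, h4⟩ <;> omega
      · have hv : basev a b.1 a.1 c.2 = d.1 := by
          unfold basev
          rcases hdd with ⟨h3, h4⟩ | ⟨h3, h4⟩
          · rw [if_neg (by omega)]; exact Fin.ext (by omega)
          · rw [if_pos (by omega)]; exact Fin.ext (by omega)
        show s((basev a b.1 a.1 c.2, c.2), (nxt (basev a b.1 a.1 c.2), c.2)) = s(c, d)
        rw [hv]
        have h8 : ((d.1 : Fin m), (c.2 : Fin n)) = d := Prod.ext rfl hdc2.symm
        have h9 : (nxt d.1, c.2) = c := Prod.ext hnc.symm rfl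
        rw [h8, h9, Sym2.eq_swap]
    · -- c.1 = prv d.1
      refine Finset.mem_image.mpr ⟨(c.2, false), Finset.mem_product.mpr
        ⟨Finset.mem_erase.mpr ⟨?_, Finset.mem_univ _⟩, Finset.mem_univ _⟩, ?_⟩
      · show c.2 ≠ a.2
        intro hh
        have h9 : (c.2 : ℕ) = (a.2 : ℕ) := congrArg Fin.val hh
        rcases hdd with ⟨_, h4⟩ | ⟨_, h4⟩ <;> omega
      · have hv : basev a b.1 a.1 c.2 = d.1 := by
          unfold basev
          rcases hdd with ⟨h3, h4⟩ | ⟨h3, h4⟩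
          · rw [if_neg (by omega)]; exact Fin.ext (by omega)
          · rw [if_pos (by omega)]; exact Fin.ext (by omega)
        show s((basev a b.1 a.1 c.2, c.2), (prv (basev a b.1 a.1 c.2), c.2)) = s(c, d)
        rw [hv]
        have h8 : ((d.1 : Fin m), (c.2 : Fin n)) = d := Prod.ext rfl hdc2.symm
        have h9 : (prv d.1, c.2) = c := Prod.ext hnc.symm rfl
        rw [h8, h9, Sym2.eq_swap]
/-- For every even `n ≥ 1` and even `m`, the `m × n` stacked prism `Y_{m,n}`
admits a convex drawing in which every edge crosses at most `2n − 2` other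
edges; that is, the convex local crossing number of `Y_{m,n}` is at most
`2n − 2`. -/
theorem stackedPrism_outerkPlanar (m n : ℕ) (hn : 1 ≤ n) (hne : Even n)
    (hme : Even m) :
    IsOuterkPlanar (stackedPrism m n) (2 * n - 2) := by
  classical
  refine ⟨fun p => ((iotaf p : ℕ) : ℝ), ?_, ?_⟩
  · intro p q h
    exact iota_inj (Nat.cast_injective h)
  · intro a b hab
    have key : ∀ a b : Fin m × Fin n,
        (stackedPrism m n).Adj a b →
        ((a.1 = b.1 ∧ (b.2 : ℕ) = (a.2 : ℕ) + 1) ∨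
         (a.2 = b.2 ∧ ((b.1 : ℕ) = (a.1 : ℕ) + 1 ∨ ((a.1 : ℕ) = 0 ∧ (b.1 : ℕ) = m - 1)))) →
        crossNum (stackedPrism m n) (fun p => ((iotaf p : ℕ) : ℝ)) a b ≤ 2 * n - 2 := by
      intro a b hadj hr
      rcases hr with ⟨h1, h2⟩ | ⟨h1, h2⟩
      · -- row edge : no crossings at all
        have hempty : {e ∈ (stackedPrism m n).edgeSet |
            Pierces (fun p => ((iotaf p : ℕ) : ℝ)) e a b} = ∅ := by
          ext e
          simp only [Set.mem_setOf_eq, Set.mem_empty_iff_false, iff_false, not_and]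
          rintro - ⟨c, d, -, hac, had, hbc, hbd, hx⟩
          have hb1 : (b.1 : ℕ) = (a.1 : ℕ) := (congrArg Fin.val h1).symm
          have hib : iotaf b = iotaf a + 1 := by
            show b.1.1 * n + b.2.1 = a.1.1 * n + a.2.1 + 1
            rw [hb1]; omega
          have hmin : min (iotaf a) (iotaf b) = iotaf a := min_eq_left (by omega)
          have hmax : max (iotaf a) (iotaf b) = iotaf b := max_eq_right (by omega)
          rcases hx with ⟨hx1, -⟩ | ⟨hx1, -⟩
          · have h1' := (arc_iff (iotaf c) (iotaf a) (iotaf b)).mp hx1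
            rw [hmin, hmax] at h1'
            omega
          · have h1' := (arc_iff (iotaf d) (iotaf a) (iotaf b)).mp hx1
            rw [hmin, hmax] at h1'
            omega
        rw [crossNum, hempty]
        simp
      · rcases h2 with h2 | ⟨h2, h3⟩
        · -- step column edge
          have hsub : {e ∈ (stackedPrism m n).edgeSet |
              Pierces (fun p => ((iotaf p : ℕ) : ℝ)) e a b} ⊆ ↑(Fset a a.1 b.1) :=
            fun e he => pierce_memB h1 h2 he.1 he.2
          have h4 := Set.ncard_le_ncard hsub (Fset a a.1 b.1).finite_toSet
          rw [Set.ncard_coe_finset] at h4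
          exact le_trans h4 (Fset_card a a.1 b.1)
        · -- wrap edge
          have hsub : {e ∈ (stackedPrism m n).edgeSet |
              Pierces (fun p => ((iotaf p : ℕ) : ℝ)) e a b} ⊆ ↑(Fset a b.1 a.1) :=
            fun e he => pierce_memC h1 h2 h3 hadj.ne he.1 he.2
          have h4 := Set.ncard_le_ncard hsub (Fset a b.1 a.1).finite_toSet
          rw [Set.ncard_coe_finset] at h4
          exact le_trans h4 (Fset_card a b.1 a.1)
    have hab' := hab
    rw [stackedPrism, SimpleGraph.fromRel_adj] at hab'
    rcases hab'.2 with hr | hr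
    · exact key a b hab hr
    · rw [crossNum_comm]
      exact key b a hab.symm hr
end

section
/- For every even k ≥ 0 and n = k/2 + 1, if m is sufficiently large (in particular every balanced separator must be considered, and m > 6n suffices), then the stacked prism Y_{m,n} has no balanced separator of size less than 2n: for every vertex set S with |S| < 2n, some connected component of Y_{m,n} − S has more than 2mn/3 vertices. -/
/-!
Let `S` have fewer than `2n` vertices. At most `|S|` rows meet `S`, so more than `m - 2n` rows are
free of `S`. Any two free rows `i < i'` lie in one component of `Y_{m,n} - S`: the rows `i` and
`i'` split every column cycle into two arcs, and if each column met `S` on both arcs, `S` would have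
at least `2n` vertices; so some column has an arc joining the two rows that avoids `S`. Hence one
component contains more than `(m - 2n) n` vertices, which exceeds `2mn/3` as soon as `m > 6n`.
-/

open SimpleGraph

theorem SimpleGraph.induce_reachable_of_chain {V : Type*} {G : SimpleGraph V} {s : Set V}
    {N : ℕ} (f : Fin N → V) (hf : ∀ t t' : Fin N, (t' : ℕ) = t + 1 → G.Adj (f t) (f t'))
    {a b : Fin N} (hab : a ≤ b) (hs : ∀ t, a ≤ t → t ≤ b → f t ∈ s) :
    (G.induce s).Reachable ⟨f a, hs a le_rfl hab⟩ ⟨f b, hs b hab le_rfl⟩ := by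
  obtain ⟨b, hbN⟩ := b
  induction b with
  | zero =>
    obtain rfl : a = ⟨0, hbN⟩ := Fin.ext (Nat.le_zero.1 hab)
    rfl
  | succ b ih =>
    rcases hab.eq_or_lt with rfl | hlt
    · rfl
    have hreach := ih (by omega) (Nat.lt_succ_iff.1 hlt) fun t hat htb =>
      hs t hat (htb.trans (Nat.le_succ b))
    exact hreach.trans (Adj.reachable (hf ⟨b, _⟩ ⟨b + 1, hbN⟩ rfl))

namespace stackedPrism

variable {m n : ℕ}

theorem adj_right (i : Fin m) {j j' : Fin n} (h : (j' : ℕ) = j + 1) :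
    (stackedPrism m n).Adj (i, j) (i, j') := by
  simp [stackedPrism, h, Fin.ext_iff]

theorem adj_down {i i' : Fin m} (j : Fin n) (h : (i' : ℕ) = i + 1) :
    (stackedPrism m n).Adj (i, j) (i', j) := by
  simp [stackedPrism, h, Fin.ext_iff]

theorem adj_wrap (hm : 2 ≤ m) (j : Fin n) :
    (stackedPrism m n).Adj (⟨0, by omega⟩, j) (⟨m - 1, by omega⟩, j) := by
  simp [stackedPrism, Fin.ext_iff]; omega

variable {S : Set (Fin m × Fin n)}

theorem exists_free_arc (hS : S.ncard < 2 * n) (i i' : Fin m) :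
    ∃ j : Fin n, (∀ t, i < t → t < i' → (t, j) ∉ S) ∨ (∀ t, t < i ∨ i' < t → (t, j) ∉ S) := by
  classical
  by_contra! h
  have hcount : 2 * (Finset.univ : Finset (Fin n)).card ≤ S.toFinset.card := by
    refine Finset.mul_card_image_le_card_of_maps_to (f := Prod.snd) (by simp) 2 fun j _ => ?_
    obtain ⟨⟨t, hit, hti', htS⟩, ⟨t', ht', ht'S⟩⟩ := h j
    refine Finset.one_lt_card.2 ⟨(t, j), by simpa using htS, (t', j), by simpa using ht'S, ?_⟩
    simp only [ne_eq, Prod.mk.injEq, and_true]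
    rintro rfl
    exact ht'.elim (lt_asymm hit) (lt_asymm hti')
  rw [Finset.card_univ, Fintype.card_fin, ← Set.ncard_coe_finset, Set.coe_toFinset] at hcount
  omega

theorem reachable_row {i : Fin m} (hi : ∀ j, (i, j) ∉ S) (j j' : Fin n) :
    ((stackedPrism m n).induce Sᶜ).Reachable ⟨(i, j), hi j⟩ ⟨(i, j'), hi j'⟩ := by
  wlog hjj' : j ≤ j' generalizing j j'
  · exact (this j' j (le_of_not_ge hjj')).symm
  exact induce_reachable_of_chain (fun j => (i, j)) (fun _ _ => adj_right i) hjj' fun j _ _ => hi j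

theorem reachable_column (j : Fin n) {a b : Fin m} (hab : a ≤ b)
    (hS : ∀ t, a ≤ t → t ≤ b → (t, j) ∉ S) :
    ((stackedPrism m n).induce Sᶜ).Reachable
      ⟨(a, j), hS a le_rfl hab⟩ ⟨(b, j), hS b hab le_rfl⟩ :=
  induce_reachable_of_chain (fun t => (t, j)) (fun _ _ => adj_down j) hab hS

theorem reachable_of_free_rows (hm : 2 ≤ m) (hS : S.ncard < 2 * n) {i i' : Fin m}
    (hi : ∀ j, (i, j) ∉ S) (hi' : ∀ j, (i', j) ∉ S) (j₁ j₂ : Fin n) :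
    ((stackedPrism m n).induce Sᶜ).Reachable ⟨(i, j₁), hi j₁⟩ ⟨(i', j₂), hi' j₂⟩ := by
  wlog hii' : i ≤ i' generalizing i i' j₁ j₂
  · exact (this hi' hi j₂ j₁ (le_of_not_ge hii')).symm
  obtain ⟨j, hinner | houter⟩ := exists_free_arc hS i i'
  · have hcol := reachable_column j hii' fun t hit hti' => by
      rcases hit.eq_or_lt with rfl | hit
      · exact hi j
      rcases hti'.eq_or_lt with rfl | hti'
      · exact hi' j
      exact hinner t hit hti'
    exact ((reachable_row hi j₁ j).trans hcol).trans (reachable_row hi' j j₂)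
  · have hup := reachable_column j (a := (⟨0, by omega⟩ : Fin m)) (Fin.le_def.2 (Nat.zero_le _))
      fun t _ hti => by
      rcases hti.eq_or_lt with rfl | hti
      exacts [hi j, houter t (Or.inl hti)]
    have hdown := reachable_column j (a := i') (b := (⟨m - 1, by omega⟩ : Fin m))
      (Fin.le_def.2 (Nat.le_sub_one_of_lt i'.isLt)) fun t hit _ => by
      rcases hit.eq_or_lt with rfl | hit
      exacts [hi' j, houter t (Or.inr hit)]
    refine (reachable_row hi j₁ j).trans <| hup.symm.trans <| (Adj.reachable ?_).trans <|
      hdown.symm.trans (reachable_row hi' j j₂)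
    exact adj_wrap hm j

theorem exists_connectedComponent_le_ncard_supp (hm : 2 * n ≤ m) (hS : S.ncard < 2 * n) :
    ∃ C : ((stackedPrism m n).induce Sᶜ).ConnectedComponent, (m - S.ncard) * n ≤ C.supp.ncard := by
  set R : Set (Fin m) := (Prod.fst '' S)ᶜ
  have hR : m - S.ncard ≤ R.ncard := by
    have hsum : (Prod.fst '' S).ncard + R.ncard = m := by
      rw [Set.ncard_add_ncard_compl, Nat.card_eq_fintype_card, Fintype.card_fin]
    have := Set.ncard_image_le (f := Prod.fst) (s := S)
    omega
  have hfree {i : Fin m} (hi : i ∈ R) (j : Fin n) : (i, j) ∉ S := fun h => hi ⟨_, h, rfl⟩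
  obtain ⟨i₀, hi₀⟩ : R.Nonempty := Set.nonempty_of_ncard_ne_zero (by omega)
  let j₀ : Fin n := ⟨0, by omega⟩
  let C := ((stackedPrism m n).induce Sᶜ).connectedComponentMk ⟨(i₀, j₀), hfree hi₀ j₀⟩
  refine ⟨C, ?_⟩
  have hsub : R ×ˢ (Set.univ : Set (Fin n)) ⊆ Subtype.val '' C.supp := by
    rintro ⟨i, j⟩ ⟨hi, -⟩
    refine ⟨⟨(i, j), hfree hi j⟩, ?_, rfl⟩
    exact ConnectedComponent.sound (reachable_of_free_rows (by omega) hS _ _ j j₀)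
  calc (m - S.ncard) * n ≤ R.ncard * n := Nat.mul_le_mul_right n hR
    _ = (R ×ˢ (Set.univ : Set (Fin n))).ncard := by simp [Set.ncard_prod]
    _ ≤ _ := Set.ncard_le_ncard hsub
    _ = _ := Set.ncard_image_of_injective _ Subtype.val_injective

end stackedPrism

theorem stackedPrism_no_small_balanced_separator_general (n m : ℕ) (hm : m > 6 * n) :
    ∀ S : Set (Fin m × Fin n), S.ncard < 2 * n →
      ∃ C : ((stackedPrism m n).induce Sᶜ).ConnectedComponent,
        3 * C.supp.ncard > 2 * (m * n) := by
  intro S hS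
  obtain ⟨C, hC⟩ := stackedPrism.exists_connectedComponent_le_ncard_supp (by omega) hS
  refine ⟨C, lt_of_lt_of_le ?_ (Nat.mul_le_mul_left 3 hC)⟩
  have hrows : 2 * m < 3 * (m - S.ncard) := by omega
  calc 2 * (m * n) = 2 * m * n := by ring
    _ < 3 * (m - S.ncard) * n := Nat.mul_lt_mul_of_pos_right hrows (by omega)
    _ = _ := by ring

/-- For every even `k ≥ 0` and `n = k/2 + 1`, if `m > 6n`, then the stacked
prism `Y_{m,n}` has no balanced separator of size less than `2n`: for every
vertex set `S` with `|S| < 2n`, some connected component of `Y_{m,n} − S` has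
more than `2mn/3` vertices. -/
theorem stackedPrism_no_small_balanced_separator (k n m : ℕ) (hk : Even k)
    (hn : n = k / 2 + 1) (hm : m > 6 * n) :
    ∀ S : Set (Fin m × Fin n), S.ncard < 2 * n →
      ∃ C : ((stackedPrism m n).induce Sᶜ).ConnectedComponent,
        3 * C.supp.ncard > 2 * (m * n) :=
  stackedPrism_no_small_balanced_separator_general n m hm
end
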